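/- arXiv:1506.03470 — 5 statements merged into one kernel-verified Lean document; each statement's English description precedes it below -/
import Mathlib

section
/- Let n ≥ 1 and x = (x_1,…,x_n) ∈ ℕ^n. Then the number of x-parking functions equals the polynomial P_n(x_1,…,x_n) := ∑_{(α_1,…,α_n) ∈ PF(n)} x_{α_1+1} · x_{α_2+1} ⋯ x_{α_n+1}, where the sum is over all classical parking functions of length n. -/
/-- `α` is an `x`-parking function of length `n`.  Here the vector
`x = (x_1,…,x_n)` is given 0-based, i.e. `x k` is `x_{k+1}`.  The condition used is the
equivalent one: for each `1 ≤ j ≤ n`, at least `j` entries of `α` are `≤ x_1 + ⋯ + x_j − 1`,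
i.e. `< x_1 + ⋯ + x_j`. -/
def IsVPF (n : ℕ) (x : ℕ → ℕ) (α : Fin n → ℕ) : Prop :=
  ∀ j : Fin n, (j : ℕ) + 1 ≤
    (Finset.univ.filter fun i => α i < ∑ k ∈ Finset.range ((j : ℕ) + 1), x k).card

/-!
Cut `ℕ` into consecutive blocks, the `k`-th of length `x k`, and send each entry of `β` to the
index of its block. Since `β i < x 0 + ⋯ + x j` exactly when the block index of `β i` is at most
`j`, this turns `x`-parking functions into classical ones, and the `x`-parking functions lying over
a classical parking function `α` are exactly the `β` with `β i` in block `α i` for every `i`: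
there are `∏ i, x (α i)` of them.
-/

namespace ParkingFunction

open Finset

variable {n : ℕ} {x : ℕ → ℕ}

/-- The index of the block `[x 0 + ⋯ + x (k-1), x 0 + ⋯ + x k)` containing `b`, capped at `n`. -/
def blockIndex (n : ℕ) (x : ℕ → ℕ) (b : ℕ) : ℕ :=
  #{j ∈ range n | ∑ k ∈ range (j + 1), x k ≤ b}

lemma blockIndex_le_iff {b j : ℕ} (hj : j < n) :
    blockIndex n x b ≤ j ↔ b < ∑ k ∈ range (j + 1), x k := by
  have sum_mono : Monotone fun m => ∑ k ∈ range m, x k := fun _ _ h =>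
    sum_le_sum_of_subset (range_subset_range.2 h)
  constructor
  · intro h
    by_contra! hb
    have : range (j + 1) ⊆ {j' ∈ range n | ∑ k ∈ range (j' + 1), x k ≤ b} := fun j' hj' => by
      rw [mem_range] at hj'
      exact mem_filter.2 ⟨mem_range.2 (by omega), (sum_mono (by omega)).trans hb⟩
    have := card_le_card this
    rw [card_range] at this
    unfold blockIndex at h
    omega
  · intro hb
    have : {j' ∈ range n | ∑ k ∈ range (j' + 1), x k ≤ b} ⊆ range j := fun j' hj' => by
      rw [mem_filter] at hj'
      by_contra! hjj'
      rw [mem_range, not_lt] at hjj'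
      exact (hb.trans_le ((sum_mono (by omega)).trans hj'.2)).false
    simpa [blockIndex] using card_le_card this

lemma blockIndex_eq_iff {b k : ℕ} (hk : k < n) :
    blockIndex n x b = k ↔ b ∈ Ico (∑ i ∈ range k, x i) (∑ i ∈ range (k + 1), x i) := by
  rw [mem_Ico, ← blockIndex_le_iff hk]
  cases k with
  | zero => simp
  | succ k =>
    have := blockIndex_le_iff (x := x) (b := b) (Nat.lt_of_succ_lt hk)
    omega

lemma isVPF_iff_isVPF_blockIndex {β : Fin n → ℕ} :
    IsVPF n x β ↔ IsVPF n (fun _ => 1) (blockIndex n x ∘ β) := by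
  refine forall_congr' fun j => ?_
  congr! 3 with i
  simp only [Function.comp_apply, sum_const, card_range, smul_eq_mul, mul_one,
    Nat.lt_succ_iff, blockIndex_le_iff j.isLt]

lemma IsVPF.lt_sum {β : Fin n → ℕ} (h : IsVPF n x β) (i : Fin n) :
    β i < ∑ k ∈ range n, x k := by
  have hn : n - 1 + 1 = n := Nat.sub_add_cancel (Nat.one_le_of_lt i.isLt)
  have hall := h ⟨n - 1, by omega⟩
  simp only [hn] at hall
  exact card_filter_eq_iff.1 (le_antisymm (card_filter_le _ _) (by simpa using hall)) i
    (mem_univ i)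

instance : DecidablePred (IsVPF n x) := fun _ => by unfold IsVPF; infer_instance

def parkingFinset (n : ℕ) (x : ℕ → ℕ) : Finset (Fin n → ℕ) :=
  {β ∈ Fintype.piFinset fun _ => range (∑ k ∈ range n, x k) | IsVPF n x β}

lemma mem_parkingFinset {β : Fin n → ℕ} : β ∈ parkingFinset n x ↔ IsVPF n x β := by
  simp only [parkingFinset, mem_filter, Fintype.mem_piFinset, mem_range, and_iff_right_iff_imp]
  exact IsVPF.lt_sum

lemma coe_parkingFinset : (parkingFinset n x : Set (Fin n → ℕ)) = {β | IsVPF n x β} :=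
  Set.ext fun _ => mem_parkingFinset

lemma filter_blockIndex_eq {α : Fin n → ℕ} (hα : IsVPF n (fun _ => 1) α) :
    {β ∈ parkingFinset n x | blockIndex n x ∘ β = α} =
      Fintype.piFinset fun i => Ico (∑ k ∈ range (α i), x k) (∑ k ∈ range (α i + 1), x k) := by
  have hα_lt (i : Fin n) : α i < n := by simpa using IsVPF.lt_sum hα i
  ext β
  simp only [mem_filter, mem_parkingFinset, Fintype.mem_piFinset, ← blockIndex_eq_iff (hα_lt _)]
  rw [isVPF_iff_isVPF_blockIndex, ← funext_iff]
  exact ⟨fun h => h.2, fun h => ⟨by rwa [Function.comp_def, h], h⟩⟩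

lemma card_parkingFinset :
    #(parkingFinset n x) = ∑ α ∈ parkingFinset n (fun _ => 1), ∏ i, x (α i) := by
  have maps_to (β) (hβ : β ∈ parkingFinset n x) :
      blockIndex n x ∘ β ∈ parkingFinset n (fun _ => 1) := by
    rw [mem_parkingFinset] at hβ ⊢
    exact isVPF_iff_isVPF_blockIndex.1 hβ
  rw [card_eq_sum_card_fiberwise maps_to]
  refine sum_congr rfl fun α hα => ?_
  rw [filter_blockIndex_eq (mem_parkingFinset.1 hα), Fintype.card_piFinset]
  simp only [Nat.card_Ico, sum_range_succ, Nat.add_sub_cancel_left]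

end ParkingFunction

open ParkingFunction in
theorem stmt0_general (n : ℕ) (x : ℕ → ℕ) :
    Set.ncard {α : Fin n → ℕ | IsVPF n x α} =
      ∑ᶠ α ∈ {α : Fin n → ℕ | IsVPF n (fun _ => 1) α}, ∏ i : Fin n, x (α i) := by
  rw [← coe_parkingFinset, ← coe_parkingFinset, Set.ncard_coe_finset, finsum_mem_coe_finset,
    card_parkingFinset]

/-- Pitman–Stanley: the number of `x`-parking functions equals
`∑_{α ∈ PF(n)} x_{α_1+1} ⋯ x_{α_n+1}`, the sum over classical parking functions of length `n`
(which are exactly the `(1,1,…,1)`-parking functions). -/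
theorem stmt0 (n : ℕ) (hn : 1 ≤ n) (x : ℕ → ℕ) :
    Set.ncard {α : Fin n → ℕ | IsVPF n x α} =
      ∑ᶠ α ∈ {α : Fin n → ℕ | IsVPF n (fun _ => 1) α}, ∏ i : Fin n, x (α i) :=
  stmt0_general n x
end

section
/- Let n ≥ 1 and x = (x_1,…,x_n) ∈ ℕ^n. Then the number of x-parking functions equals ∑_{(γ_1,…,γ_n) ∈ Γ(n)} (n! / (γ_1! γ_2! ⋯ γ_n!)) · x_1^{γ_1} x_2^{γ_2} ⋯ x_n^{γ_n}. -/
/-- `Γ(n)`: sequences `(γ_1,…,γ_n) ∈ ℕ^n` with `γ_1+⋯+γ_j ≥ j` for all `j` and total sum `n`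
(the condition for `j = n` follows from the total-sum condition, so this agrees with the
definition requiring the inequality only for `1 ≤ j ≤ n−1`). -/
def GammaSet (n : ℕ) : Set (Fin n → ℕ) :=
  {γ | (∀ j : Fin n, (j : ℕ) + 1 ≤ ∑ k ∈ Finset.Iic j, γ k) ∧ (∑ k, γ k) = n}

/-!
Cut `[0, x₁ + ⋯ + xₙ)` into consecutive blocks of lengths `x₁, …, xₙ`. An `x`-parking function
takes all its values below `x₁ + ⋯ + xₙ`, so it amounts to choosing, for each of the `n` cars, a
block and a position inside that block; it is an `x`-parking function exactly when its block
profile `γ` (`γᵢ` cars in block `i`) lies in `Γ(n)`. The number of choices with profile `γ` is the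
coefficient of `X^γ` in `(x₁ X₁ + ⋯ + xₙ Xₙ)ⁿ`, which the multinomial theorem gives as
`n! / (γ₁! ⋯ γₙ!) · x₁^γ₁ ⋯ xₙ^γₙ`.
-/

open Finset MvPolynomial

section FiberCard

variable {ι σ : Type*} [Fintype ι] [DecidableEq σ]

def fiberCard (b : ι → σ) (k : σ) : ℕ := #{j | b j = k}

lemma sum_fiberCard [Fintype σ] (b : ι → σ) : ∑ k, fiberCard b k = Fintype.card ι := by
  simp [fiberCard, sum_card_fiberwise_eq_card_filter]

lemma sum_Iic_fiberCard [LinearOrder σ] [LocallyFiniteOrderBot σ] (b : ι → σ) (k : σ) :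
    ∑ j ∈ Iic k, fiberCard b j = #{i | b i ≤ k} := by
  simp [fiberCard, sum_card_fiberwise_eq_card_filter]

lemma prod_comp_eq_prod_pow_fiberCard [Fintype σ] {M : Type*} [CommMonoid M] (f : σ → M)
    (b : ι → σ) : ∏ j, f (b j) = ∏ k, f k ^ fiberCard b k := by
  rw [← prod_fiberwise univ b]
  refine prod_congr rfl fun k _ => ?_
  rw [fiberCard, ← prod_const]
  exact prod_congr rfl fun j hj => by rw [(mem_filter.1 hj).2]

lemma coeff_sum_prod_X_pow [Fintype σ] (γ : σ → ℕ) (d : ι → σ → ℕ) :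
    coeff (Finsupp.equivFunOnFinite.symm γ) (∑ i, ∏ k, (X k : MvPolynomial σ ℕ) ^ d i k) =
      #{i | d i = γ} := by
  simp only [coeff_sum, coeff_prod_X_pow]
  rw [card_eq_sum_ones, sum_filter]
  refine sum_congr rfl fun i _ => ?_
  simp [Finsupp.ext_iff, funext_iff, Finsupp.indicator_apply, eq_comm]

lemma card_fiberCard_fst_eq [Fintype σ] [DecidableEq ι] (a γ : σ → ℕ)
    (hγ : ∑ k, γ k = Fintype.card ι) :
    #{β : ι → Σ k, Fin (a k) | fiberCard (Sigma.fst ∘ β) = γ} =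
      Nat.multinomial univ γ * ∏ k, a k ^ γ k := by
  have hsum : (∑ k, a k • X k : MvPolynomial σ ℕ) = ∑ v : Σ k, Fin (a k), X v.1 := by
    simp [Fintype.sum_sigma]
  have hexpand : (∑ k, a k • X k : MvPolynomial σ ℕ) ^ Fintype.card ι =
      ∑ β : ι → Σ k, Fin (a k), ∏ k, X k ^ fiberCard (Sigma.fst ∘ β) k := by
    rw [hsum, ← card_univ, ← prod_const, Fintype.prod_sum]
    exact sum_congr rfl fun β _ => prod_comp_eq_prod_pow_fiberCard (fun k => X k) (Sigma.fst ∘ β)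
  have hcoeff := coeff_linearCombination_X_pow_of_fintype a
    (Finsupp.equivFunOnFinite.symm γ) (Fintype.card ι)
  rw [hexpand, coeff_sum_prod_X_pow, Finsupp.multinomial_eq_of_support_subset (subset_univ _)]
    at hcoeff
  simpa [Finsupp.sum_fintype, Finsupp.prod_fintype, hγ] using hcoeff

end FiberCard

lemma card_filter_mem_eq_finsum_mem {α β : Type*} [Fintype α] [DecidableEq β] (f : α → β)
    {S : Set β} [DecidablePred (· ∈ S)] (hS : S.Finite) :
    #{a | f a ∈ S} = ∑ᶠ b ∈ S, #{a | f a = b} := by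
  rw [finsum_mem_eq_finite_toFinset_sum _ hS, sum_card_fiberwise_eq_card_filter]
  simp

section Blocks

variable (x : ℕ → ℕ) {n : ℕ}

def blockPos (v : Σ i : Fin n, Fin (x i)) : ℕ := ∑ k ∈ range v.1, x k + v.2

lemma blockPos_eq_finSigmaFinEquiv (v : Σ i : Fin n, Fin (x i)) :
    blockPos x v = finSigmaFinEquiv v := by
  simp [blockPos, finSigmaFinEquiv_apply, Fin.sum_univ_eq_sum_range (fun k => x k)]

lemma blockPos_injective : Function.Injective (blockPos x (n := n)) := by
  intro v w h
  rw [blockPos_eq_finSigmaFinEquiv, blockPos_eq_finSigmaFinEquiv] at h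
  exact finSigmaFinEquiv.injective (Fin.ext h)

lemma exists_blockPos_eq {m : ℕ} (hm : m < ∑ k ∈ range n, x k) :
    ∃ v : Σ i : Fin n, Fin (x i), blockPos x v = m := by
  rw [← Fin.sum_univ_eq_sum_range] at hm
  exact ⟨finSigmaFinEquiv.symm ⟨m, hm⟩, by simp [blockPos_eq_finSigmaFinEquiv]⟩

lemma blockPos_lt_iff (v : Σ i : Fin n, Fin (x i)) (m : ℕ) :
    blockPos x v < ∑ k ∈ range m, x k ↔ (v.1 : ℕ) < m := by
  have hmono {a b : ℕ} (h : a ≤ b) : ∑ k ∈ range a, x k ≤ ∑ k ∈ range b, x k :=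
    sum_le_sum_of_subset (range_subset_range.2 h)
  constructor
  · intro h
    by_contra! hm
    have hle := hmono hm
    simp only [blockPos] at h
    omega
  · intro hm
    have hle := hmono (Nat.succ_le_of_lt hm)
    have hv := v.2.isLt
    rw [sum_range_succ] at hle
    simp only [blockPos]
    omega

end Blocks

lemma IsVPF.lt_sum_range {n : ℕ} {x : ℕ → ℕ} {α : Fin n → ℕ} (h : IsVPF n x α) (i : Fin n) :
    α i < ∑ k ∈ range n, x k := by
  have hi := i.isLt
  have hlast := h ⟨n - 1, by omega⟩
  rw [Nat.sub_add_cancel (by omega)] at hlast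
  refine (card_filter_eq_iff (p := fun i => α i < ∑ k ∈ range n, x k)).1
    (le_antisymm (card_filter_le _ _) ?_) i (mem_univ i)
  simpa using hlast

lemma setOf_isVPF_eq_image (n : ℕ) (x : ℕ → ℕ) :
    {α | IsVPF n x α} =
      (blockPos x ∘ ·) '' {β : Fin n → Σ i : Fin n, Fin (x i) | IsVPF n x (blockPos x ∘ β)} := by
  ext α
  constructor
  · intro h
    choose β hβ using fun i => exists_blockPos_eq x (h.lt_sum_range i)
    have hα : blockPos x ∘ β = α := funext hβ
    exact ⟨β, by rwa [Set.mem_ofPred_eq, hα], hα⟩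
  · rintro ⟨β, hβ, rfl⟩
    exact hβ

lemma isVPF_comp_blockPos_iff (n : ℕ) (x : ℕ → ℕ) (β : Fin n → Σ i : Fin n, Fin (x i)) :
    IsVPF n x (blockPos x ∘ β) ↔ fiberCard (Sigma.fst ∘ β) ∈ GammaSet n := by
  simp only [IsVPF, GammaSet, Set.mem_ofPred_eq, sum_Iic_fiberCard, sum_fiberCard,
    Fintype.card_fin, and_true, Function.comp_apply, blockPos_lt_iff, Nat.lt_succ_iff,
    Fin.val_fin_le]

lemma gammaSet_finite (n : ℕ) : (GammaSet n).Finite := by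
  refine (Set.finite_Iic (fun _ => n)).subset fun γ hγ i => ?_
  show γ i ≤ n
  rw [← hγ.2]
  exact single_le_sum (fun k _ => Nat.zero_le (γ k)) (mem_univ i)

theorem stmt1_general (n : ℕ) (x : ℕ → ℕ) :
    Set.ncard {α : Fin n → ℕ | IsVPF n x α} =
      ∑ᶠ γ ∈ GammaSet n, (Nat.factorial n / ∏ i : Fin n, Nat.factorial (γ i)) * ∏ i : Fin n, x (i : ℕ) ^ γ i := by
  classical
  calc Set.ncard {α : Fin n → ℕ | IsVPF n x α}
      = #{β : Fin n → Σ i : Fin n, Fin (x i) | fiberCard (Sigma.fst ∘ β) ∈ GammaSet n} := by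
        rw [setOf_isVPF_eq_image, Set.ncard_image_of_injective _ (blockPos_injective x).comp_left,
          Set.ncard_eq_toFinset_card']
        simp [isVPF_comp_blockPos_iff]
    _ = ∑ᶠ γ ∈ GammaSet n, #{β : Fin n → Σ i : Fin n, Fin (x i) | fiberCard (Sigma.fst ∘ β) = γ} :=
        card_filter_mem_eq_finsum_mem _ (gammaSet_finite n)
    _ = _ := finsum_mem_congr rfl fun γ hγ => by
        rw [card_fiberCard_fst_eq _ _ (by simpa using hγ.2), Nat.multinomial, hγ.2]

/-- Pitman–Stanley: `#PF(x) = ∑_{γ ∈ Γ(n)} (n!/(γ_1!⋯γ_n!)) x_1^{γ_1} ⋯ x_n^{γ_n}`. -/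
theorem stmt1 (n : ℕ) (hn : 1 ≤ n) (x : ℕ → ℕ) :
    Set.ncard {α : Fin n → ℕ | IsVPF n x α} =
      ∑ᶠ γ ∈ GammaSet n, (Nat.factorial n / ∏ i : Fin n, Nat.factorial (γ i)) * ∏ i : Fin n, x (i : ℕ) ^ γ i :=
  stmt1_general n x
end

section
/- Let G be a connected multigraph on vertex set {0,1,…,n} (n ≥ 1) with root 0 and edge-weight function ω_G. Then the number of G-parking functions equals ∑_{T ∈ SPT(G)} ∏_{e ∈ E(T)} ω_G(e), the sum over all spanning trees T of G of the product of the G-edge-weights of the edges of T. -/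
/-- `deg^G_U(i) = ∑_{j ∉ U} ω(i,j)`. -/
def degOut {n : ℕ} (ω : Fin (n + 1) → Fin (n + 1) → ℕ) (U : Finset (Fin (n + 1)))
    (i : Fin (n + 1)) : ℕ :=
  ∑ j ∈ Uᶜ, ω i j

/-- The multigraph with edge-weight function `ω` on `{0,…,n}` is connected: for every nonempty
`U ⊆ {1,…,n}` some `i ∈ U` has `deg^G_U(i) ≥ 1`. -/
def ConnMG {n : ℕ} (ω : Fin (n + 1) → Fin (n + 1) → ℕ) : Prop :=
  ∀ U : Finset (Fin (n + 1)), U.Nonempty → (0 : Fin (n + 1)) ∉ U →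
    ∃ i ∈ U, 1 ≤ degOut ω U i

/-- `α` is a `G`-parking function (the nonroot vertex `i+1` carries value `α i`): for every
nonempty `U ⊆ {1,…,n}` there is `i ∈ U` with `α_i ≤ deg^G_U(i) − 1`,
i.e. `α_i + 1 ≤ deg^G_U(i)`. -/
def IsGPF (n : ℕ) (ω : Fin (n + 1) → Fin (n + 1) → ℕ) (α : Fin n → ℕ) : Prop :=
  ∀ U : Finset (Fin (n + 1)), U.Nonempty → (0 : Fin (n + 1)) ∉ U →
    ∃ i : Fin n, i.succ ∈ U ∧ α i + 1 ≤ degOut ω U i.succ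

/-- Spanning trees of `G` rooted at `0`, encoded by parent functions: `par 0 = 0`, iterating
`par` from any vertex reaches the root `0`, and each edge `{v, par v}` of the tree is an edge
of `G` (has positive weight). -/
def SPTset (n : ℕ) (ω : Fin (n + 1) → Fin (n + 1) → ℕ) :
    Set (Fin (n + 1) → Fin (n + 1)) :=
  {par | par 0 = 0 ∧ (∀ v, ∃ m : ℕ, par^[m] v = 0) ∧
    ∀ v, v ≠ 0 → (par v ≠ v ∧ 1 ≤ ω v (par v))}

/-!
Dhar's burning bijection. Burn the vertices one at a time starting from the root, each time
burning the least unburnt vertex that is *eligible* for the already burnt set `B`: for a parking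
function `α`, a vertex `v` with `α v < #(edges from v to B)`; for a tree, a vertex whose parent
lies in `B`. Given the burning order, `α v` is written uniquely as
`#(edges from v to the vertices burnt before u) + c` with `u` burnt before `v` and `c < ω(v, u)`;
making `u` the parent of `v` turns `α` into a spanning tree with edge labels `c < ω(v, par v)`.
Under this coding a vertex is eligible for `α` exactly when it is eligible for the tree, so both
have the same burning order, and burning orders are unique: the correspondence is a bijection.
-/

open Finset

theorem Nat.card_eq_of_existsUnique {X Y : Type*} (R : X → Y → Prop)
    (h₁ : ∀ x, ∃! y, R x y) (h₂ : ∀ y, ∃! x, R x y) : Nat.card X = Nat.card Y := by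
  choose f hf hfu using h₁
  refine Nat.card_congr (Equiv.ofBijective f ⟨fun x x' hxx' => ?_, fun y => ?_⟩)
  · exact (h₂ (f x)).unique (hf x) (hxx' ▸ hf x')
  · obtain ⟨x, hx, -⟩ := h₂ y
    exact ⟨x, (hfu x y hx).symm⟩

namespace Burning

section Below

variable {V : Type*} [Fintype V] (ρ : V ≃ Fin (Fintype.card V))

def below (k : ℕ) : Finset V :=
  univ.filter fun u => (ρ u : ℕ) < k

@[simp]
theorem mem_below {u : V} {k : ℕ} : u ∈ below ρ k ↔ (ρ u : ℕ) < k := by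
  simp [below]

theorem below_zero : below ρ 0 = ∅ := by
  ext; simp

theorem below_mono : Monotone (below ρ) :=
  fun _ _ hkl _ => by simp only [mem_below]; omega

theorem below_rank_succ [DecidableEq V] (u : V) :
    below ρ (ρ u + 1) = insert u (below ρ (ρ u)) := by
  ext w
  simp only [mem_below, mem_insert, Nat.lt_succ_iff_lt_or_eq, ← ρ.apply_eq_iff_eq (x := w),
    Fin.ext_iff]
  tauto

section Swap

variable [DecidableEq V] {m : ℕ} {v w : V}

theorem swap_trans_apply_of_lt (hv : m ≤ ρ v) (hw : m ≤ ρ w) {u : V} (hu : (ρ u : ℕ) < m) :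
    (Equiv.swap v w).trans ρ u = ρ u := by
  rw [Equiv.trans_apply, Equiv.swap_apply_of_ne_of_ne (by rintro rfl; omega)
    (by rintro rfl; omega)]

theorem below_swap_trans (hv : m ≤ ρ v) (hw : m ≤ ρ w) {k : ℕ} (hk : k ≤ m) :
    below ((Equiv.swap v w).trans ρ) k = below ρ k := by
  ext u
  simp only [mem_below, Equiv.trans_apply, Equiv.swap_apply_def]
  split_ifs <;> subst_vars <;> omega

end Swap

def weightBelow (f : V → ℕ) (k : ℕ) : ℕ :=
  ∑ u ∈ below ρ k, f u

theorem weightBelow_mono (f : V → ℕ) : Monotone (weightBelow ρ f) :=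
  fun _ _ hkl => sum_le_sum_of_subset (below_mono ρ hkl)

variable {ρ}

theorem rank_eq_zero_iff {r : V} (h0 : (ρ r : ℕ) = 0) {v : V} : (ρ v : ℕ) = 0 ↔ v = r :=
  ⟨fun hv => ρ.injective (Fin.ext (hv.trans h0.symm)), fun hv => hv ▸ h0⟩

variable (f : V → ℕ)

theorem weightBelow_zero : weightBelow ρ f 0 = 0 := by
  simp [weightBelow, below_zero]

theorem weightBelow_rank_succ (u : V) :
    weightBelow ρ f (ρ u + 1) = weightBelow ρ f (ρ u) + f u := by
  classical
  rw [weightBelow, below_rank_succ, sum_insert (by simp), add_comm]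
  rfl

theorem weightBelow_add_lt_iff {u : V} {c : ℕ} (hc : c < f u) (k : ℕ) :
    weightBelow ρ f (ρ u) + c < weightBelow ρ f k ↔ (ρ u : ℕ) < k := by
  constructor
  · intro h
    by_contra! hk
    have := weightBelow_mono ρ f hk
    omega
  · intro hk
    have := weightBelow_mono ρ f (Nat.succ_le_of_lt hk)
    rw [weightBelow_rank_succ] at this
    omega

theorem eq_of_weightBelow_add_eq {u u' : V} {c c' : ℕ} (hc : c < f u) (hc' : c' < f u')
    (h : weightBelow ρ f (ρ u) + c = weightBelow ρ f (ρ u') + c') : u = u' ∧ c = c' := by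
  have h₁ := (weightBelow_add_lt_iff f hc (ρ u' + 1)).1
    (h ▸ (weightBelow_add_lt_iff f hc' _).2 (Nat.lt_succ_self _))
  have h₂ := (weightBelow_add_lt_iff f hc' (ρ u + 1)).1
    (h ▸ (weightBelow_add_lt_iff f hc _).2 (Nat.lt_succ_self _))
  obtain rfl : u = u' := ρ.injective (Fin.ext (by omega))
  exact ⟨rfl, by omega⟩

theorem exists_eq_weightBelow_add {a k : ℕ} (hk : k ≤ Fintype.card V)
    (ha : a < weightBelow ρ f k) : ∃ u, ∃ c < f u, a = weightBelow ρ f (ρ u) + c := by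
  induction k with
  | zero => simp [weightBelow_zero] at ha
  | succ k ih =>
    by_cases hak : a < weightBelow ρ f k
    · exact ih (by omega) hak
    · set u := ρ.symm ⟨k, hk⟩
      have hu : (ρ u : ℕ) = k := by simp [u]
      rw [← hu] at ha hak
      rw [weightBelow_rank_succ] at ha
      exact ⟨u, a - weightBelow ρ f (ρ u), by omega, by omega⟩

end Below

section Order

variable {V : Type*} [Fintype V] [LinearOrder V]

def eligibleAt (E : V → Finset V → Prop) (ρ : V ≃ Fin (Fintype.card V)) (k : ℕ) : Set V :=
  {w | w ∉ below ρ k ∧ E w (below ρ k)}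

/-- `ρ v` is the step at which `v` burns when, starting from `r`, each step burns the least
unburnt vertex `w` with `E w B`, `B` being the set of vertices burnt so far. -/
def IsBurningOrder (E : V → Finset V → Prop) (r : V) (ρ : V ≃ Fin (Fintype.card V)) : Prop :=
  (ρ r : ℕ) = 0 ∧ ∀ v ≠ r, IsLeast (eligibleAt E ρ (ρ v)) v

variable {E E' : V → Finset V → Prop} {r : V} {ρ ρ' : V ≃ Fin (Fintype.card V)}

theorem IsBurningOrder.elig (h : IsBurningOrder E r ρ) {v : V} (hv : v ≠ r) :
    E v (below ρ (ρ v)) :=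
  (h.2 v hv).1.2

theorem IsBurningOrder.congr (h : IsBurningOrder E r ρ)
    (hEE' : ∀ w ≠ r, ∀ k, E w (below ρ k) ↔ E' w (below ρ k)) : IsBurningOrder E' r ρ := by
  refine ⟨h.1, fun v hv => ?_⟩
  have hr : r ∈ below ρ (ρ v) := by
    have := (rank_eq_zero_iff h.1).not.2 hv
    simp only [mem_below, h.1]
    omega
  convert h.2 v hv using 1
  ext w
  refine and_congr_right fun hw => (hEE' w ?_ _).symm
  rintro rfl
  exact hw hr

theorem IsBurningOrder.unique (h : IsBurningOrder E r ρ) (h' : IsBurningOrder E r ρ') :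
    ρ = ρ' := by
  have hbelow : ∀ k ≤ Fintype.card V, below ρ k = below ρ' k := by
    intro k hk
    induction k with
    | zero => simp [below_zero]
    | succ k ih =>
      set v := ρ.symm ⟨k, hk⟩
      set v' := ρ'.symm ⟨k, hk⟩
      have hv : (ρ v : ℕ) = k := by simp [v]
      have hv' : (ρ' v' : ℕ) = k := by simp [v']
      have hvv' : v = v' := by
        rcases Nat.eq_zero_or_pos k with rfl | hk0
        · rw [rank_eq_zero_iff h.1] at hv
          rw [rank_eq_zero_iff h'.1] at hv'
          rw [hv, hv']
        · have hl := h.2 v ((rank_eq_zero_iff h.1).not.1 (by omega))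
          have hl' := h'.2 v' ((rank_eq_zero_iff h'.1).not.1 (by omega))
          rw [eligibleAt, hv, ih (by omega)] at hl
          rw [eligibleAt, hv'] at hl'
          exact hl.unique hl'
      rw [← hv, below_rank_succ, hv, ih (by omega), ← hv', below_rank_succ, hv', hvv']
  refine Equiv.ext fun v => Fin.ext ?_
  have h₁ := (Finset.ext_iff.1 (hbelow (ρ v + 1) (ρ v).2) v).1 (by simp)
  have h₂ := (Finset.ext_iff.1 (hbelow (ρ' v + 1) (ρ' v).2) v).2 (by simp)
  simp only [mem_below] at h₁ h₂
  omega

theorem exists_isBurningOrder (hE : ∀ B : Finset V, r ∈ B → B ≠ univ → ∃ v ∉ B, E v B) :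
    ∃ ρ, IsBurningOrder E r ρ := by
  suffices ∀ m, 1 ≤ m → m ≤ Fintype.card V → ∃ ρ : V ≃ Fin (Fintype.card V), (ρ r : ℕ) = 0 ∧
      ∀ v ≠ r, (ρ v : ℕ) < m → IsLeast (eligibleAt E ρ (ρ v)) v by
    obtain ⟨ρ, h0, h⟩ := this _ (Fintype.card_pos_iff.2 ⟨r⟩) le_rfl
    exact ⟨ρ, h0, fun v hv => h v hv (ρ v).2⟩
  intro m hm
  induction m, hm using Nat.le_induction with
  | base =>
    intro hN
    set ρ := (Fintype.equivFin V).trans (Equiv.swap (Fintype.equivFin V r) ⟨0, hN⟩)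
    have h0 : (ρ r : ℕ) = 0 := by simp [ρ]
    exact ⟨ρ, h0, fun v hv hv1 => absurd ((rank_eq_zero_iff h0).1 (by omega)) hv⟩
  | succ m hm ih =>
    intro hmN
    obtain ⟨ρ, h0, h⟩ := ih (by omega)
    have hr : r ∈ below ρ m := by simp [h0]; omega
    have hB : below ρ m ≠ univ := fun hB => by
      simpa [← hB] using mem_univ (ρ.symm ⟨m, hmN⟩)
    obtain ⟨v, hvE, hvmin⟩ : ∃ v ∈ eligibleAt E ρ m, ∀ w ∈ eligibleAt E ρ m, v ≤ w := by
      obtain ⟨w, hw⟩ := hE _ hr hB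
      exact Set.exists_min_image _ id (Set.toFinite _) ⟨w, hw⟩
    have hv : m ≤ (ρ v : ℕ) := by simpa using hvE.1
    have hm' : m ≤ (ρ (ρ.symm ⟨m, hmN⟩) : ℕ) := by simp
    set ρ' := (Equiv.swap v (ρ.symm ⟨m, hmN⟩)).trans ρ
    have hbelow {k} (hk : k ≤ m) : below ρ' k = below ρ k := below_swap_trans ρ hv hm' hk
    refine ⟨ρ', by rw [swap_trans_apply_of_lt ρ hv hm' (by omega), h0], fun u hu hum => ?_⟩
    rcases Nat.lt_succ_iff_lt_or_eq.1 hum with hum | hum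
    · have hρu : (ρ u : ℕ) < m := by simpa [hbelow le_rfl] using (mem_below ρ').2 hum
      rw [eligibleAt, swap_trans_apply_of_lt ρ hv hm' hρu, hbelow hρu.le]
      exact h u hu hρu
    · have hρ'v : (ρ' v : ℕ) = m := by simp [ρ']
      obtain rfl : u = v := ρ'.injective (Fin.ext (hum.trans hρ'v.symm))
      rw [eligibleAt, hum, hbelow le_rfl]
      exact ⟨hvE, hvmin⟩

theorem exists_isBurningOrder_iff_iterate {par : V → V} :
    (∃ ρ, IsBurningOrder (fun v B => par v ∈ B) r ρ) ↔ ∀ v, ∃ m, par^[m] v = r := by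
  constructor
  · rintro ⟨ρ, h⟩ v
    induction hk : (ρ v : ℕ) using Nat.strong_induction_on generalizing v with
    | _ k ih =>
      by_cases hv : v = r
      · exact ⟨0, hv⟩
      · obtain ⟨m, hm⟩ := ih _ (hk ▸ by simpa using h.elig hv) (par v) rfl
        exact ⟨m + 1, by rwa [Function.iterate_succ_apply]⟩
  · intro hpar
    refine exists_isBurningOrder fun B hr hB => ?_
    obtain ⟨u, hu⟩ : ∃ u, u ∉ B := by simpa [Finset.eq_univ_iff_forall] using hB
    have hex : ∃ m, par^[m] u ∈ B := (hpar u).imp fun m (hm : par^[m] u = r) => hm ▸ hr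
    classical
    have hm0 : Nat.find hex ≠ 0 := fun h => hu (by simpa [h] using Nat.find_spec hex)
    refine ⟨par^[Nat.find hex - 1] u, Nat.find_min hex (by omega), ?_⟩
    rw [← Function.iterate_succ_apply' par, Nat.succ_eq_add_one, Nat.sub_add_cancel (by omega)]
    exact Nat.find_spec hex

end Order

end Burning

namespace ParkingFunction

open Burning

variable {n : ℕ} (ω : Fin (n + 1) → Fin (n + 1) → ℕ)

def parkingElig (α : Fin n → ℕ) (v : Fin (n + 1)) (B : Finset (Fin (n + 1))) : Prop :=
  (Fin.cons 0 α : Fin (n + 1) → ℕ) v < ∑ u ∈ B, ω v u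

theorem isGPF_iff_exists_isBurningOrder {α : Fin n → ℕ} :
    IsGPF n ω α ↔ ∃ ρ, IsBurningOrder (parkingElig ω α) 0 ρ := by
  constructor
  · intro hα
    refine exists_isBurningOrder fun B hr hB => ?_
    obtain ⟨i, hi, hαi⟩ :=
      hα Bᶜ ((compl_ne_univ_iff_nonempty _).1 (by rwa [compl_compl])) (by simpa using hr)
    exact ⟨i.succ, by simpa using hi, by simpa [parkingElig, degOut] using hαi⟩
  · rintro ⟨ρ, hρ⟩ U hU hU0
    obtain ⟨v, hvU, hmin⟩ := U.exists_min_image ρ hU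
    have hv0 : v ≠ 0 := fun h => hU0 (h ▸ hvU)
    obtain ⟨i, rfl⟩ := Fin.exists_succ_eq.2 hv0
    have hsub : below ρ (ρ i.succ) ⊆ Uᶜ := fun w hw => mem_compl.2 fun hwU => by
      simpa using (mem_below ρ).1 hw |>.trans_le (hmin w hwU)
    refine ⟨i, hvU, ?_⟩
    calc α i + 1 ≤ ∑ u ∈ below ρ (ρ i.succ), ω i.succ u := by
          simpa [parkingElig] using hρ.elig hv0
      _ ≤ degOut ω U i.succ := sum_le_sum_of_subset hsub

theorem mem_SPTset_iff {par : Fin (n + 1) → Fin (n + 1)} :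
    par ∈ SPTset n ω ↔ par 0 = 0 ∧ (∀ v, ∃ m, par^[m] v = 0) ∧ ∀ v ≠ 0, 1 ≤ ω v (par v) := by
  refine ⟨fun ⟨h0, hreach, h⟩ => ⟨h0, hreach, fun v hv => (h v hv).2⟩,
    fun ⟨h0, hreach, h⟩ => ⟨h0, hreach, fun v hv => ⟨fun hfix => ?_, h v hv⟩⟩⟩
  obtain ⟨m, hm⟩ := hreach v
  exact hv (Function.iterate_fixed hfix m ▸ hm)

def Encodes (ρ : Fin (n + 1) ≃ Fin (Fintype.card (Fin (n + 1)))) (α : Fin n → ℕ)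
    (par : Fin (n + 1) → Fin (n + 1)) (c : Fin n → ℕ) : Prop :=
  ∀ i, c i < ω i.succ (par i.succ) ∧ α i = weightBelow ρ (ω i.succ) (ρ (par i.succ)) + c i

variable {ω}

theorem Encodes.isBurningOrder_iff {ρ α par c} (h : Encodes ω ρ α par c) :
    IsBurningOrder (parkingElig ω α) 0 ρ ↔ IsBurningOrder (fun v B => par v ∈ B) 0 ρ := by
  have key : ∀ w ≠ 0, ∀ k, parkingElig ω α w (below ρ k) ↔ par w ∈ below ρ k := by
    intro w hw k
    obtain ⟨i, rfl⟩ := Fin.exists_succ_eq.2 hw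
    rw [parkingElig, Fin.cons_succ, (h i).2, mem_below]
    exact weightBelow_add_lt_iff _ (h i).1 k
  exact ⟨fun hρ => hρ.congr key, fun hρ => hρ.congr fun w hw k => (key w hw k).symm⟩

variable (ω)

def Corresponds (α : Fin n → ℕ) (p : (Fin (n + 1) → Fin (n + 1)) × (Fin n → ℕ)) : Prop :=
  p.1 0 = 0 ∧ ∃ ρ, IsBurningOrder (fun v B => p.1 v ∈ B) 0 ρ ∧ Encodes ω ρ α p.1 p.2

abbrev LabelledTree :=
  {p : (Fin (n + 1) → Fin (n + 1)) × (Fin n → ℕ) //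
    p.1 ∈ SPTset n ω ∧ ∀ i, p.2 i < ω i.succ (p.1 i.succ)}

variable {ω}

theorem Corresponds.left_unique {α α' p} (h : Corresponds ω α p) (h' : Corresponds ω α' p) :
    α = α' := by
  obtain ⟨-, ρ, hρ, henc⟩ := h
  obtain ⟨-, ρ', hρ', henc'⟩ := h'
  obtain rfl := hρ.unique hρ'
  exact funext fun i => (henc i).2.trans (henc' i).2.symm

theorem Corresponds.right_unique {α p p'} (h : Corresponds ω α p) (h' : Corresponds ω α p') :
    p = p' := by
  obtain ⟨h0, ρ, hρ, henc⟩ := h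
  obtain ⟨h0', ρ', hρ', henc'⟩ := h'
  obtain rfl := (henc.isBurningOrder_iff.2 hρ).unique (henc'.isBurningOrder_iff.2 hρ')
  have hi i := eq_of_weightBelow_add_eq _ (henc i).1 (henc' i).1
    ((henc i).2.symm.trans (henc' i).2)
  exact Prod.ext (funext (Fin.cases (h0.trans h0'.symm) fun i => (hi i).1))
    (funext fun i => (hi i).2)

theorem existsUnique_corresponds_of_isGPF {α : Fin n → ℕ} (hα : IsGPF n ω α) :
    ∃! p : LabelledTree ω, Corresponds ω α p.1 := by
  obtain ⟨ρ, hρ⟩ := (isGPF_iff_exists_isBurningOrder ω).1 hα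
  have hdec i : ∃ u, ∃ c < ω i.succ u, α i = weightBelow ρ (ω i.succ) (ρ u) + c :=
    exists_eq_weightBelow_add _ (ρ i.succ).2.le
      (by simpa [parkingElig, weightBelow] using hρ.elig (Fin.succ_ne_zero i))
  choose q c hc hα using hdec
  have henc : Encodes ω ρ α (Fin.cons 0 q) c := fun i => by simpa using ⟨hc i, hα i⟩
  have hT := henc.isBurningOrder_iff.1 hρ
  have htree : (Fin.cons 0 q : Fin (n + 1) → Fin (n + 1)) ∈ SPTset n ω := by
    refine (mem_SPTset_iff ω).2 ⟨rfl, exists_isBurningOrder_iff_iterate.1 ⟨ρ, hT⟩, fun v hv => ?_⟩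
    obtain ⟨i, rfl⟩ := Fin.exists_succ_eq.2 hv
    exact Nat.one_le_of_lt (henc i).1
  exact ⟨⟨(Fin.cons 0 q, c), htree, fun i => (henc i).1⟩, ⟨rfl, ρ, hT, henc⟩,
    fun p hp => Subtype.ext (hp.right_unique ⟨rfl, ρ, hT, henc⟩)⟩

theorem existsUnique_corresponds (p : LabelledTree ω) :
    ∃! α : {α | IsGPF n ω α}, Corresponds ω α.1 p.1 := by
  obtain ⟨⟨par, c⟩, hpar, hc⟩ := p
  obtain ⟨hroot, hreach, -⟩ := (mem_SPTset_iff ω).1 hpar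
  obtain ⟨ρ, hρ⟩ := exists_isBurningOrder_iff_iterate.2 hreach
  have henc : Encodes ω ρ (fun i => weightBelow ρ (ω i.succ) (ρ (par i.succ)) + c i) par c :=
    fun i => ⟨hc i, rfl⟩
  refine ⟨⟨_, (isGPF_iff_exists_isBurningOrder ω).2 ⟨ρ, henc.isBurningOrder_iff.2 hρ⟩⟩,
    ⟨hroot, ρ, hρ, henc⟩, fun α hα => Subtype.ext (hα.left_unique ⟨hroot, ρ, hρ, henc⟩)⟩

theorem card_labelledTree :
    Nat.card (LabelledTree ω) = ∑ᶠ par ∈ SPTset n ω, ∏ i : Fin n, ω i.succ (par i.succ) := by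
  have : Fintype (SPTset n ω) := (Set.toFinite _).fintype
  let e : LabelledTree ω ≃ Σ par : SPTset n ω, ∀ i : Fin n, Fin (ω i.succ (par.1 i.succ)) :=
    { toFun p := ⟨⟨p.1.1, p.2.1⟩, fun i => ⟨p.1.2 i, p.2.2 i⟩⟩
      invFun s := ⟨(s.1.1, fun i => s.2 i), s.1.2, fun i => (s.2 i).2⟩
      left_inv _ := rfl
      right_inv _ := rfl }
  rw [Nat.card_congr e, Nat.card_eq_fintype_card, Fintype.card_sigma, finsum_mem_eq_toFinset_sum]
  simp only [Fintype.card_pi, Fintype.card_fin]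
  exact Finset.sum_set_coe (f := fun par : Fin (n + 1) → Fin (n + 1) =>
    ∏ i : Fin n, ω i.succ (par i.succ)) _

end ParkingFunction

theorem stmt5_general (n : ℕ) (ω : Fin (n + 1) → Fin (n + 1) → ℕ) :
    Set.ncard {α : Fin n → ℕ | IsGPF n ω α} =
      ∑ᶠ par ∈ SPTset n ω, ∏ i : Fin n, ω i.succ (par i.succ) := by
  rw [← Nat.card_coe_set_eq, ← ParkingFunction.card_labelledTree]
  exact Nat.card_eq_of_existsUnique (fun α p => ParkingFunction.Corresponds ω α.1 p.1)
    (fun α => ParkingFunction.existsUnique_corresponds_of_isGPF α.2)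
    ParkingFunction.existsUnique_corresponds

/-- Matrix-tree fact: `#PF(G) = ∑_{T ∈ SPT(G)} ∏_{e ∈ E(T)} ω_G(e)` (the edges of a spanning
tree are the pairs `{v, par v}` for nonroot `v`). -/
theorem stmt5 (n : ℕ) (hn : 1 ≤ n) (ω : Fin (n + 1) → Fin (n + 1) → ℕ)
    (hsymm : ∀ i j, ω i j = ω j i) (hdiag : ∀ i, ω i i = 0) (hconn : ConnMG ω) :
    Set.ncard {α : Fin n → ℕ | IsGPF n ω α} =
      ∑ᶠ par ∈ SPTset n ω, ∏ i : Fin n, ω i.succ (par i.succ) :=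
  stmt5_general n ω
end

section
/- Let G be a connected multigraph on vertex set {0,1,…,n} (n ≥ 1) with root 0. The map O ↦ (indeg_O(1)−1, indeg_O(2)−1, …, indeg_O(n)−1) is a bijection between A(G), the set of acyclic orientations of G with unique source 0, and MPF(G), the set of maximal G-parking functions. -/
/-- Maximal `G`-parking functions, w.r.t. the componentwise order on `ℕ^n`. -/
def MPFset (n : ℕ) (ω : Fin (n + 1) → Fin (n + 1) → ℕ) : Set (Fin n → ℕ) :=
  {α | IsGPF n ω α ∧ ∀ β : Fin n → ℕ, IsGPF n ω β → α ≤ β → β = α}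

/-- `O` is an orientation of the multigraph with edge-weight function `ω`. -/
def IsOrientation {n : ℕ} (ω : Fin (n + 1) → Fin (n + 1) → ℕ)
    (O : Set (Fin (n + 1) × Fin (n + 1))) : Prop :=
  (∀ i, (i, i) ∉ O) ∧ (∀ p ∈ O, 1 ≤ ω p.1 p.2) ∧
    ∀ i j : Fin (n + 1), 1 ≤ ω i j → Xor' ((i, j) ∈ O) ((j, i) ∈ O)

/-- `indeg_O(i) = ∑_{(j,i) ∈ O} ω(i,j)`. -/
noncomputable def indegO {n : ℕ} (ω : Fin (n + 1) → Fin (n + 1) → ℕ)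
    (O : Set (Fin (n + 1) × Fin (n + 1))) (i : Fin (n + 1)) : ℕ :=
  ∑ᶠ j ∈ {j : Fin (n + 1) | (j, i) ∈ O}, ω i j

/-- `O` is acyclic: no sequence `(i_1,i_2),(i_2,i_3),…,(i_k,i_{k+1})` of elements of `O`
with `i_1 = i_{k+1}`. -/
def AcyclicO {n : ℕ} (O : Set (Fin (n + 1) × Fin (n + 1))) : Prop :=
  ¬ ∃ (k : ℕ) (f : ℕ → Fin (n + 1)), 0 < k ∧ (∀ m < k, (f m, f (m + 1)) ∈ O) ∧ f 0 = f k

/-- `A(G)`: acyclic orientations of `G` with unique source `0` (a source is a vertex of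
indegree `0`). -/
def ASet (n : ℕ) (ω : Fin (n + 1) → Fin (n + 1) → ℕ) :
    Set (Set (Fin (n + 1) × Fin (n + 1))) :=
  {O | IsOrientation ω O ∧ AcyclicO O ∧ indegO ω O 0 = 0 ∧
    ∀ i : Fin (n + 1), i ≠ 0 → indegO ω O i ≠ 0}

/-!
An acyclic orientation `O` with unique source `0` yields a parking function: in a set `U ∌ 0`
of vertices, a source of `O` restricted to `U` receives all of its edges from outside `U`.
Conversely, Dhar's burning algorithm turns a parking function `α` into some `O ∈ A(G)` with
`α_i < indeg_O(i)`: repeatedly delete from `U` a vertex `i` with `α_i < deg_U(i)` and orient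
each edge from the endpoint deleted first (or the root) towards the other one.
Since `∑_v indeg_O(v)` is the total edge weight for every orientation, comparable indegree
vectors are equal, which gives maximality and surjectivity. Injectivity holds because the
edges on which two orientations with the same indegrees disagree carry, at every vertex,
as much incoming as outgoing weight, so a nonempty set of them contains a cycle.
-/

open Finset

section Orientation

variable {n : ℕ} {ω : Fin (n + 1) → Fin (n + 1) → ℕ} {O O' : Set (Fin (n + 1) × Fin (n + 1))}

open Classical in
lemma indegO_eq_sum (ω : Fin (n + 1) → Fin (n + 1) → ℕ) (O : Set (Fin (n + 1) × Fin (n + 1)))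
    (i : Fin (n + 1)) : indegO ω O i = ∑ j with (j, i) ∈ O, ω i j := by
  rw [indegO, ← finsum_mem_coe_finset]
  simp

lemma IsOrientation.mem_swap_iff (hO : IsOrientation ω O) {a b : Fin (n + 1)}
    (hab : 1 ≤ ω a b) : (b, a) ∈ O ↔ (a, b) ∉ O :=
  (xor_iff_not_iff'.1 (hO.2.2 a b hab)).symm

lemma IsOrientation.mem_sdiff_swap_iff (hO : IsOrientation ω O) (hsymm : ∀ i j, ω i j = ω j i)
    (hO' : IsOrientation ω O') {a b : Fin (n + 1)} : (a, b) ∈ O' \ O ↔ (b, a) ∈ O \ O' := by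
  refine ⟨fun ⟨h', h⟩ => ?_, fun ⟨h, h'⟩ => ?_⟩
  · have hw : 1 ≤ ω a b := hO'.2.1 _ h'
    exact ⟨(hO.mem_swap_iff hw).2 h, fun h'' => (hO'.mem_swap_iff hw).1 h'' h'⟩
  · have hw : 1 ≤ ω a b := hsymm a b ▸ hO.2.1 _ h
    exact ⟨by_contra fun h'' => h' ((hO'.mem_swap_iff hw).2 h''), (hO.mem_swap_iff hw).1 h⟩

open Classical in
lemma IsOrientation.ite_add_ite (hO : IsOrientation ω O) (i j : Fin (n + 1)) :
    ((if (j, i) ∈ O then ω i j else 0) + if (i, j) ∈ O then ω i j else 0) = ω i j := by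
  rcases Nat.eq_zero_or_pos (ω i j) with hw | hw
  · simp [hw]
  · by_cases hij : (i, j) ∈ O
    · simp [hij, (hO.mem_swap_iff hw).not_left.2 hij]
    · simp [hij, (hO.mem_swap_iff hw).2 hij]

lemma IsOrientation.two_mul_sum_indegO (hsymm : ∀ i j, ω i j = ω j i)
    (hO : IsOrientation ω O) : 2 * ∑ i, indegO ω O i = ∑ i, ∑ j, ω i j := by
  classical
  have hflip : ∑ i, ∑ j, (if (j, i) ∈ O then ω i j else 0)
      = ∑ i, ∑ j, if (i, j) ∈ O then ω i j else 0 := by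
    rw [sum_comm]
    exact sum_congr rfl fun i _ => sum_congr rfl fun j _ => by rw [hsymm]
  simp only [indegO_eq_sum, sum_filter]
  rw [two_mul]
  nth_rw 2 [hflip]
  simp only [← sum_add_distrib, hO.ite_add_ite]

lemma IsOrientation.indegO_eq_of_le (hsymm : ∀ i j, ω i j = ω j i) (hO : IsOrientation ω O)
    (hO' : IsOrientation ω O') (hle : ∀ v, indegO ω O v ≤ indegO ω O' v) (v : Fin (n + 1)) :
    indegO ω O v = indegO ω O' v := by
  have hsum : ∑ i, indegO ω O i = ∑ i, indegO ω O' i := by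
    have := hO.two_mul_sum_indegO hsymm
    have := hO'.two_mul_sum_indegO hsymm
    omega
  exact (sum_eq_sum_iff_of_le fun i _ => hle i).1 hsum v (mem_univ v)

lemma AcyclicO.wellFounded (hO : AcyclicO O) : WellFounded fun a b => (a, b) ∈ O := by
  refine wellFounded_iff_isEmpty_descending_chain.2 ⟨fun ⟨g, hg⟩ => ?_⟩
  obtain ⟨a, b, hab, heq⟩ := Finite.exists_ne_map_eq_of_infinite g
  wlog hlt : a < b generalizing a b
  · exact this b a hab.symm heq.symm (hab.lt_or_gt.resolve_left hlt)
  refine hO ⟨b - a, fun m => g (b - m), by omega, fun m _ => ?_, ?_⟩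
  · simpa [show b - m = b - (m + 1) + 1 by omega] using hg (b - (m + 1))
  · simp [Nat.sub_sub_self hlt.le, heq]

open Classical in
lemma AcyclicO.eq_of_indegO_eq (hsymm : ∀ i j, ω i j = ω j i) (hacyc : AcyclicO O)
    (hO : IsOrientation ω O) (hO' : IsOrientation ω O')
    (hdeg : ∀ v, indegO ω O v = indegO ω O' v) : O = O' := by
  have hrev : ∀ a b, (a, b) ∈ O' \ O ↔ (b, a) ∈ O \ O' := fun a b =>
    hO.mem_sdiff_swap_iff hsymm hO'
  have hbalance : ∀ v, ∑ j with (j, v) ∈ O \ O', ω v j = ∑ j with (v, j) ∈ O \ O', ω v j := by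
    intro v
    set s : Finset (Fin (n + 1)) := {j | (j, v) ∈ O}
    set t : Finset (Fin (n + 1)) := {j | (j, v) ∈ O'}
    have hst : ∑ j ∈ s ∩ t, ω v j + ∑ j ∈ s \ t, ω v j
        = ∑ j ∈ t ∩ s, ω v j + ∑ j ∈ t \ s, ω v j := by
      rw [sum_inter_add_sum_sdiff, sum_inter_add_sum_sdiff, ← indegO_eq_sum, ← indegO_eq_sum,
        hdeg]
    rw [inter_comm, add_left_cancel_iff] at hst
    convert hst using 2 <;> ext j
    · simp [s, t]
    · simpa [s, t] using (hrev j v).symm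
  -- an `O`-minimal tail of an edge of `O \ O'` would have outgoing but no incoming weight there
  have hsub : O ⊆ O' := by
    intro p hp
    by_contra hp'
    obtain ⟨v, ⟨w, hvw⟩, hmin⟩ :=
      hacyc.wellFounded.has_min {v | ∃ w, (v, w) ∈ O \ O'} ⟨p.1, p.2, hp, hp'⟩
    have hout : ∑ j with (v, j) ∈ O \ O', ω v j ≠ 0 :=
      (Nat.lt_of_lt_of_le (hO.2.1 _ hvw.1)
        (single_le_sum (fun _ _ => Nat.zero_le _) (by simpa using hvw))).ne'
    obtain ⟨j, hj, -⟩ := exists_ne_zero_of_sum_ne_zero ((hbalance v).trans_ne hout)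
    exact hmin j ⟨v, (mem_filter.1 hj).2⟩ (mem_filter.1 hj).2.1
  refine hsub.antisymm fun p hp => by_contra fun hp' => ?_
  obtain ⟨hq, hq'⟩ := (hrev p.1 p.2).1 ⟨hp, hp'⟩
  exact hq' (hsub hq)

end Orientation

section RankOrientation

variable {n : ℕ} {ω : Fin (n + 1) → Fin (n + 1) → ℕ} {r : Fin (n + 1) → ℕ}

def rankOrientation (ω : Fin (n + 1) → Fin (n + 1) → ℕ) (r : Fin (n + 1) → ℕ) :
    Set (Fin (n + 1) × Fin (n + 1)) :=
  {p | 1 ≤ ω p.1 p.2 ∧ r p.1 < r p.2}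

lemma isOrientation_rankOrientation (hsymm : ∀ i j, ω i j = ω j i) (hdiag : ∀ i, ω i i = 0)
    (hr : Function.Injective r) : IsOrientation ω (rankOrientation ω r) := by
  refine ⟨fun i hi => lt_irrefl _ hi.2, fun p hp => hp.1, fun i j hw => ?_⟩
  have hij : i ≠ j := by rintro rfl; rw [hdiag] at hw; omega
  rcases (hr.ne hij).lt_or_gt with h | h
  · exact Or.inl ⟨⟨hw, h⟩, fun h' => h'.2.asymm h⟩
  · exact Or.inr ⟨⟨hsymm i j ▸ hw, h⟩, fun h' => h'.2.asymm h⟩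

lemma acyclicO_rankOrientation (ω : Fin (n + 1) → Fin (n + 1) → ℕ) (r : Fin (n + 1) → ℕ) :
    AcyclicO (rankOrientation ω r) := by
  rintro ⟨k, f, hk, hf, hfk⟩
  have hrise : ∀ m ≤ k, r (f 0) + m ≤ r (f m) := by
    intro m hm
    induction m with
    | zero => exact le_rfl
    | succ m ih =>
      have hstep : r (f m) < r (f (m + 1)) := (hf m (by omega)).2
      have := ih (by omega)
      omega
  have := hrise k le_rfl
  rw [← hfk] at this
  omega

open Classical in
lemma indegO_rankOrientation (hsymm : ∀ i j, ω i j = ω j i) (v : Fin (n + 1)) :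
    indegO ω (rankOrientation ω r) v = ∑ j with r j < r v, ω v j := by
  rw [indegO_eq_sum, sum_filter, sum_filter]
  refine sum_congr rfl fun j _ => ?_
  by_cases hj : r j < r v
  · rw [hsymm v j]
    by_cases hw : 1 ≤ ω j v <;> simp [rankOrientation, hj, hw]
    omega
  · simp [rankOrientation, hj]

end RankOrientation

section ParkingFunction

variable {n : ℕ} {ω : Fin (n + 1) → Fin (n + 1) → ℕ} {O O' : Set (Fin (n + 1) × Fin (n + 1))}
  {α : Fin n → ℕ}

noncomputable def shiftedIndeg (ω : Fin (n + 1) → Fin (n + 1) → ℕ)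
    (O : Set (Fin (n + 1) × Fin (n + 1))) : Fin n → ℕ :=
  fun i => indegO ω O i.succ - 1

lemma isGPF_shiftedIndeg (hO : O ∈ ASet n ω) : IsGPF n ω (shiftedIndeg ω O) := by
  obtain ⟨-, hacyc, -, hpos⟩ := hO
  intro U hU h0U
  obtain ⟨v, hvU, hv⟩ := hacyc.wellFounded.has_min U hU
  obtain ⟨i, rfl⟩ := Fin.exists_succ_eq.2 (ne_of_mem_of_not_mem hvU h0U)
  refine ⟨i, hvU, ?_⟩
  have hle : indegO ω O i.succ ≤ degOut ω U i.succ := by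
    classical
    rw [indegO_eq_sum, degOut]
    exact sum_le_sum_of_subset fun j hj => mem_compl.2 fun hjU => hv j hjU (mem_filter.1 hj).2
  have := Nat.pos_of_ne_zero (hpos _ (Fin.succ_ne_zero i))
  simp only [shiftedIndeg]
  omega

/-- `r` records the order in which Dhar's burning algorithm deletes the vertices of `U`. -/
lemma IsGPF.exists_rank (hα : IsGPF n ω α) (U : Finset (Fin (n + 1))) (h0U : 0 ∉ U) :
    ∃ r : Fin (n + 1) → ℕ, (∀ v ∉ U, r v = 0) ∧ (∀ v ∈ U, 0 < r v) ∧ Set.InjOn r U ∧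
      ∀ i : Fin n, i.succ ∈ U → α i + 1 ≤ ∑ j with r j < r i.succ, ω i.succ j := by
  induction U using Finset.strongInduction with
  | H U ih =>
  rcases U.eq_empty_or_nonempty with rfl | hU
  · exact ⟨0, fun _ _ => rfl, by simp, by simp, by simp⟩
  obtain ⟨i, hiU, hi⟩ := hα U hU h0U
  obtain ⟨r, hr0, hrpos, hrinj, hr⟩ :=
    ih (U.erase i.succ) (erase_ssubset hiU) fun h => h0U (mem_of_mem_erase h)
  have hr0_iff : ∀ v ∈ U, r v = 0 ↔ v = i.succ := fun v hv =>
    ⟨fun h => by_contra fun hne => (hrpos v (mem_erase.2 ⟨hne, hv⟩)).ne' h,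
      fun h => hr0 v (h ▸ notMem_erase _ _)⟩
  refine ⟨fun v => if v ∈ U then r v + 1 else 0, fun v hv => if_neg hv,
    fun v hv => by simp [hv], fun v hv w hw h => ?_, fun k hk => ?_⟩
  · simp only [mem_coe] at hv hw
    simp only [hv, hw, if_true, add_left_inj] at h
    by_cases hvi : v = i.succ
    · rw [hvi, ← (hr0_iff w hw).1 (h ▸ (hr0_iff v hv).2 hvi)]
    · exact hrinj (mem_erase.2 ⟨hvi, hv⟩) (mem_erase.2 ⟨fun hwi => hvi ((hr0_iff v hv).1
        (h.trans ((hr0_iff w hw).2 hwi))), hw⟩) h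
  · have hlower : ∀ j, ((if j ∈ U then r j + 1 else 0) < if k.succ ∈ U then r k.succ + 1 else 0)
        ↔ j ∉ U ∨ r j < r k.succ := by
      intro j
      by_cases hj : j ∈ U <;> simp [hj, hk]
    simp only [hlower]
    by_cases hki : k = i
    · subst hki
      simpa [(hr0_iff _ hk).2 rfl, degOut, filter_not, compl_eq_univ_sdiff] using hi
    · refine (hr k (mem_erase.2 ⟨(Fin.succ_injective n).ne hki, hk⟩)).trans_eq ?_
      congr 1
      ext j
      simp only [mem_filter, mem_univ, true_and]
      refine ⟨Or.inr, fun h => h.elim (fun hj => ?_) id⟩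
      rw [hr0 j fun h => hj (mem_of_mem_erase h)]
      exact hrpos _ (mem_erase.2 ⟨(Fin.succ_injective n).ne hki, hk⟩)

lemma IsGPF.exists_mem_ASet_le (hsymm : ∀ i j, ω i j = ω j i) (hdiag : ∀ i, ω i i = 0)
    (hα : IsGPF n ω α) : ∃ O ∈ ASet n ω, α ≤ shiftedIndeg ω O := by
  classical
  have h0 : (0 : Fin (n + 1)) ∉ univ.erase 0 := notMem_erase 0 univ
  obtain ⟨r, hr0, hrpos, hrinj, hr⟩ := hα.exists_rank (univ.erase 0) h0
  have hinj : Function.Injective r := by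
    rw [← Set.injOn_univ, ← coe_univ, ← insert_erase (mem_univ 0), coe_insert,
      Set.injOn_insert h0]
    exact ⟨hrinj, fun ⟨v, hv, hrv⟩ => (hrpos v hv).ne' (hrv.trans (hr0 0 h0))⟩
  have hindeg : ∀ i : Fin n, α i + 1 ≤ indegO ω (rankOrientation ω r) i.succ := fun i => by
    rw [indegO_rankOrientation hsymm]
    exact hr i (mem_erase.2 ⟨Fin.succ_ne_zero i, mem_univ _⟩)
  refine ⟨rankOrientation ω r, ⟨isOrientation_rankOrientation hsymm hdiag hinj,
    acyclicO_rankOrientation ω r, ?_, fun v hv => ?_⟩, fun i => ?_⟩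
  · simp [indegO_rankOrientation hsymm, hr0 0 h0]
  · obtain ⟨i, rfl⟩ := Fin.exists_succ_eq.2 hv
    have := hindeg i
    omega
  · have := hindeg i
    simp only [shiftedIndeg]
    omega

lemma indegO_le_of_shiftedIndeg_le (hO : O ∈ ASet n ω) (hO' : O' ∈ ASet n ω)
    (h : shiftedIndeg ω O ≤ shiftedIndeg ω O') (v : Fin (n + 1)) :
    indegO ω O v ≤ indegO ω O' v := by
  rcases Fin.eq_zero_or_eq_succ v with rfl | ⟨i, rfl⟩
  · simp [hO.2.2.1]
  · have hle : indegO ω O i.succ - 1 ≤ indegO ω O' i.succ - 1 := h i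
    have hpos := hO'.2.2.2 i.succ (Fin.succ_ne_zero i)
    omega

lemma shiftedIndeg_eq_of_le (hsymm : ∀ i j, ω i j = ω j i) (hO : O ∈ ASet n ω)
    (hO' : O' ∈ ASet n ω) (h : shiftedIndeg ω O ≤ shiftedIndeg ω O') :
    shiftedIndeg ω O = shiftedIndeg ω O' :=
  funext fun i => by
    simp only [shiftedIndeg,
      hO.1.indegO_eq_of_le hsymm hO'.1 (indegO_le_of_shiftedIndeg_le hO hO' h)]

lemma eq_of_shiftedIndeg_eq (hsymm : ∀ i j, ω i j = ω j i) (hO : O ∈ ASet n ω)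
    (hO' : O' ∈ ASet n ω) (h : shiftedIndeg ω O = shiftedIndeg ω O') : O = O' :=
  hO.2.1.eq_of_indegO_eq hsymm hO.1 hO'.1 fun v =>
    (indegO_le_of_shiftedIndeg_le hO hO' h.le v).antisymm
      (indegO_le_of_shiftedIndeg_le hO' hO h.ge v)

end ParkingFunction

theorem stmt7_general (n : ℕ) (ω : Fin (n + 1) → Fin (n + 1) → ℕ)
    (hsymm : ∀ i j, ω i j = ω j i) (hdiag : ∀ i, ω i i = 0) :
    Set.BijOn (fun O => fun i : Fin n => indegO ω O i.succ - 1)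
      (ASet n ω) (MPFset n ω) := by
  change Set.BijOn (shiftedIndeg ω) _ _
  refine ⟨fun O hO => ⟨isGPF_shiftedIndeg hO, fun β hβ hle => ?_⟩,
    fun O hO O' hO' h => eq_of_shiftedIndeg_eq hsymm hO hO' h, fun α ⟨hα, hmax⟩ => ?_⟩
  · obtain ⟨O', hO', hβO'⟩ := hβ.exists_mem_ASet_le hsymm hdiag
    exact (hβO'.trans (shiftedIndeg_eq_of_le hsymm hO hO' (hle.trans hβO')).ge).antisymm hle
  · obtain ⟨O, hO, hαO⟩ := hα.exists_mem_ASet_le hsymm hdiag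
    exact ⟨O, hO, hmax _ (isGPF_shiftedIndeg hO) hαO⟩

/-- The map `O ↦ (indeg_O(1)−1,…,indeg_O(n)−1)` is a bijection from `A(G)` to `MPF(G)`. -/
theorem stmt7 (n : ℕ) (hn : 1 ≤ n) (ω : Fin (n + 1) → Fin (n + 1) → ℕ)
    (hsymm : ∀ i j, ω i j = ω j i) (hdiag : ∀ i, ω i i = 0) (hconn : ConnMG ω) :
    Set.BijOn (fun O => fun i : Fin n => indegO ω O i.succ - 1)
      (ASet n ω) (MPFset n ω) :=
  stmt7_general n ω hsymm hdiag
end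

section
/- Let a, b ≥ 1 and m ≥ 2, and let y(a,b,m) ∈ ℕ^{bm−1} be the vector whose j-th entry is a if j ≡ 1 (mod b) and 0 otherwise (i.e. y = (a,0,…,0,a,0,…,0,…,a,0,…,0) with m blocks, the last block having b−1 zeros). Then the number of y(a,b,m)-parking functions equals a^{bm−1} · m^{bm−2}. -/
open Finset

section Scaling

variable {n a : ℕ} {x : ℕ → ℕ}

theorem isVPF_mul_iff (ha : 0 < a) (α : Fin n → ℕ) :
    IsVPF n (fun k => a * x k) α ↔ IsVPF n x (fun i => α i / a) := by
  simp only [IsVPF, ← Finset.mul_sum, Nat.div_lt_iff_lt_mul ha, mul_comm _ a]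

theorem ncard_setOf_isVPF_mul (ha : 0 < a) :
    {α | IsVPF n (fun k => a * x k) α}.ncard = a ^ n * {β | IsVPF n x β}.ncard := by
  have : NeZero a := ⟨ha.ne'⟩
  let divMod : (Fin n → ℕ) ≃ (Fin n → ℕ) × (Fin n → Fin a) :=
    (Equiv.arrowCongr (Equiv.refl _) (Nat.divModEquiv a)).trans
      (Equiv.arrowProdEquivProdArrow _ _ _)
  let e : {α // IsVPF n (fun k => a * x k) α} ≃ {β // IsVPF n x β} × (Fin n → Fin a) :=
    (divMod.subtypeEquiv fun α => isVPF_mul_iff ha α).trans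
      Equiv.prodSubtypeFstEquivSubtypeProd
  rw [← Nat.card_coe_set_eq, ← Nat.card_coe_set_eq, Set.coe_ofPred, Set.coe_ofPred,
    Nat.card_congr e, Nat.card_prod, Nat.card_fun]
  simp [mul_comm]

end Scaling

theorem existsUnique_windowMax {m : ℕ} (hm : 0 < m) (f : ℕ → ℤ)
    (hf : ∀ j, f (j + m) = f j + 1) : ∃! p, p < m ∧ ∀ j < m, f (p + j) ≤ f p := by
  have not_both : ∀ p q, p < q → q < m → (∀ j < m, f (p + j) ≤ f p) →
      (∀ j < m, f (q + j) ≤ f q) → False := by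
    intro p q hpq hqm hp hq
    have h1 := hp (q - p) (by omega)
    have h2 := hq (p + m - q) (by omega)
    rw [Nat.add_sub_cancel' hpq.le] at h1
    rw [Nat.add_sub_cancel' (by omega), hf] at h2
    omega
  obtain ⟨p, hpm, hpmax, hpmin⟩ :
      ∃ p < m, (∀ k < m, f k ≤ f p) ∧ ∀ k < p, f k < f p := by
    obtain ⟨q, hq, hqmax⟩ := (range m).exists_max_image f (nonempty_range_iff.mpr hm.ne')
    have hP : ∃ k, k < m ∧ f q ≤ f k := ⟨q, mem_range.mp hq, le_rfl⟩
    obtain ⟨hpm, hpq⟩ := Nat.find_spec hP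
    have hpeq : f (Nat.find hP) = f q := le_antisymm (hqmax _ (mem_range.mpr hpm)) hpq
    refine ⟨Nat.find hP, hpm, fun k hk => (hqmax k (mem_range.mpr hk)).trans_eq hpeq.symm,
      fun k hk => ?_⟩
    by_contra! hle
    exact Nat.find_min hP hk ⟨by omega, hpeq ▸ hle⟩
  have hp : ∀ j < m, f (p + j) ≤ f p := by
    intro j hj
    rcases lt_or_ge (p + j) m with hlt | hge
    · exact hpmax _ hlt
    · have := hpmin (p + j - m) (by omega)
      rw [← Nat.sub_add_cancel hge, hf]
      omega
  refine ⟨p, ⟨hpm, hp⟩, fun q ⟨hqm, hq⟩ => ?_⟩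
  rcases lt_trichotomy q p with h | h | h
  · exact (not_both _ _ h hpm hq hp).elim
  · exact h
  · exact (not_both _ _ h hqm hp hq).elim

section CycleLemma

variable {ι : Type*} [Fintype ι] {m : ℕ} (b : ℕ)

def IsModParking (u : ι → ZMod m) : Prop :=
  ∀ k < m, k * b ≤ #{i | (u i).val < k}

def deficit (u : ι → ZMod m) (j : ℕ) : ℤ :=
  ∑ t ∈ range j, ((b : ℤ) - #{i | u i = t})

variable {b} [NeZero m]

theorem deficit_eq_of_le (u : ι → ZMod m) {j : ℕ} (hj : j ≤ m) :
    deficit b u j = j * b - #{i | (u i).val < j} := by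
  classical
  induction j with
  | zero => simp [deficit]
  | succ j ih =>
    have hval : ∀ i, u i = j ↔ (u i).val = j := fun i =>
      ⟨fun h => h ▸ ZMod.val_cast_of_lt hj, fun h => h ▸ (ZMod.natCast_zmod_val _).symm⟩
    have hsplit : #{i | (u i).val < j + 1} = #{i | (u i).val < j} + #{i | u i = j} := by
      simp_rw [hval, Nat.lt_succ_iff_lt_or_eq, filter_or]
      exact card_union_of_disjoint (disjoint_filter.mpr fun i _ h h' => by omega)
    rw [deficit, sum_range_succ, ← deficit, ih (by omega), hsplit]
    push_cast
    ring

theorem deficit_add_period (hcard : Fintype.card ι + 1 = b * m) (u : ι → ZMod m) (j : ℕ) :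
    deficit b u (j + m) = deficit b u j + 1 := by
  have hperiod : deficit b u m = 1 := by
    rw [deficit_eq_of_le u le_rfl, filter_true_of_mem fun i _ => ZMod.val_lt (u i), card_univ]
    have hcard' : (Fintype.card ι : ℤ) + 1 = b * m := by exact_mod_cast hcard
    linear_combination -hcard'
  rw [add_comm j m, deficit, sum_range_add, ← deficit, hperiod, add_comm, deficit]
  simp

theorem deficit_add_const (u : ι → ZMod m) (c : ZMod m) (j : ℕ) :
    deficit b (fun i => u i + c) j = deficit b u ((-c).val + j) - deficit b u (-c).val := by
  simp only [deficit, sum_range_add, add_sub_cancel_left]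
  refine sum_congr rfl fun t _ => ?_
  simp only [Nat.cast_add, ZMod.natCast_zmod_val, ← sub_eq_neg_add, eq_sub_iff_add_eq]

theorem isModParking_iff_deficit_nonpos (u : ι → ZMod m) :
    IsModParking b u ↔ ∀ k < m, deficit b u k ≤ 0 := by
  refine forall₂_congr fun k hk => ?_
  rw [deficit_eq_of_le u hk.le, sub_nonpos]
  exact_mod_cast Iff.rfl

theorem existsUnique_isModParking_add_const (hcard : Fintype.card ι + 1 = b * m)
    (v : ι → ZMod m) : ∃! c : ZMod m, IsModParking b fun i => v i + c := by
  have hshift : ∀ c : ZMod m, (IsModParking b fun i => v i + c) ↔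
      ∀ j < m, deficit b v ((-c).val + j) ≤ deficit b v (-c).val := by
    intro c
    simp only [isModParking_iff_deficit_nonpos, deficit_add_const, sub_nonpos]
  obtain ⟨p, ⟨hpm, hp⟩, huniq⟩ :=
    existsUnique_windowMax (NeZero.pos m) (deficit b v) (deficit_add_period hcard v)
  refine ⟨-(p : ZMod m), ?_, fun c hc => ?_⟩
  · refine (hshift _).mpr ?_
    rw [neg_neg, ZMod.val_cast_of_lt hpm]
    exact hp
  · rw [← huniq _ ⟨ZMod.val_lt _, (hshift c).mp hc⟩, ZMod.natCast_zmod_val, neg_neg]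

end CycleLemma

theorem card_mul_card_eq_pow_of_existsUnique_add_const {ι G : Type*} [Finite ι] [AddGroup G]
    (S : Set (ι → G)) (hS : ∀ v : ι → G, ∃! c : G, (fun i => v i + c) ∈ S) :
    Nat.card S * Nat.card G = Nat.card G ^ Nat.card ι := by
  let e : S × G ≃ (ι → G) :=
    { toFun := fun p i => p.1.1 i - p.2
      invFun := fun v => (⟨_, (hS v).exists.choose_spec⟩, (hS v).exists.choose)
      left_inv := by
        rintro ⟨⟨u, hu⟩, c⟩
        have hc : (hS fun i => u i - c).exists.choose = c :=
          (hS _).unique (hS _).exists.choose_spec (by simpa using hu)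
        ext <;> simp [hc]
      right_inv := fun v => by simp }
  rw [← Nat.card_prod, Nat.card_congr e, Nat.card_fun]

theorem ncard_isModParking_mul {ι : Type*} [Fintype ι] {b m : ℕ} [NeZero m]
    (hcard : Fintype.card ι + 1 = b * m) :
    {u : ι → ZMod m | IsModParking b u}.ncard * m = m ^ Fintype.card ι := by
  have := card_mul_card_eq_pow_of_existsUnique_add_const {u : ι → ZMod m | IsModParking b u}
    (existsUnique_isModParking_add_const hcard)
  rwa [Nat.card_zmod, Nat.card_eq_fintype_card (α := ι), Nat.card_coe_set_eq] at this

theorem sum_range_succ_ite_mod_eq_zero (b j : ℕ) :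
    ∑ k ∈ range (j + 1), (if k % b = 0 then 1 else 0) = j / b + 1 := by
  induction j with
  | zero => simp [filter_singleton]
  | succ j ih =>
    rw [sum_range_succ, ih, Nat.succ_div]
    simp only [Nat.dvd_iff_mod_eq_zero]
    split_ifs <;> ring

theorem isVPF_ite_mod_iff {n b m : ℕ} (hb : 0 < b) (hbm : n + 1 = b * m) (β : Fin n → ℕ) :
    IsVPF n (fun k => if k % b = 0 then 1 else 0) β ↔
      (∀ i, β i < m) ∧ ∀ k < m, k * b ≤ #{i | β i < k} := by
  simp only [IsVPF, sum_range_succ_ite_mod_eq_zero b]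
  constructor
  · intro h
    refine ⟨fun i => ?_, fun k hk => ?_⟩
    · have hlast := h ⟨n - 1, by have := i.isLt; omega⟩
      dsimp only at hlast
      have hall : #{i | β i < (n - 1) / b + 1} = #(univ : Finset (Fin n)) :=
        le_antisymm (card_filter_le _ _) (by simp only [card_univ, Fintype.card_fin]; omega)
      have hi := card_filter_eq_iff.mp hall i (mem_univ i)
      have hdiv : (n - 1) / b < m := (Nat.div_lt_iff_lt_mul hb).mpr (by rw [mul_comm]; omega)
      omega
    · rcases Nat.eq_zero_or_pos k with rfl | hk0
      · simp
      · have hkb : b ≤ k * b := Nat.le_mul_of_pos_left b hk0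
        have hkbm : k * b < b * m := by rw [mul_comm b]; exact Nat.mul_lt_mul_of_pos_right hk hb
        have hdiv : (k * b - 1) / b = k - 1 := Nat.div_eq_of_lt_le
          (by rw [Nat.sub_one_mul]; omega) (by rw [Nat.sub_add_cancel hk0]; omega)
        have := h ⟨k * b - 1, by omega⟩
        simp only [hdiv, Nat.sub_add_cancel hk0, Nat.sub_add_cancel (hb.trans_le hkb)] at this
        exact this
  · rintro ⟨hlt, hk⟩ j
    rcases lt_or_ge (j / b + 1) m with hjm | hjm
    · have := hk _ hjm
      have := Nat.lt_div_mul_add (a := j) hb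
      nlinarith
    · rw [filter_true_of_mem fun i _ => (hlt i).trans_le hjm, card_univ, Fintype.card_fin]
      exact j.isLt

theorem setOf_isVPF_ite_mod_eq_image {n b m : ℕ} [NeZero m] (hb : 0 < b) (hbm : n + 1 = b * m) :
    {β | IsVPF n (fun k => if k % b = 0 then 1 else 0) β} =
      (fun u i => (u i).val) '' {u : Fin n → ZMod m | IsModParking b u} := by
  ext β
  rw [Set.mem_ofPred_eq, isVPF_ite_mod_iff hb hbm]
  constructor
  · rintro ⟨hlt, hk⟩
    refine ⟨fun i => β i, ?_, funext fun i => ZMod.val_cast_of_lt (hlt i)⟩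
    simpa only [Set.mem_ofPred_eq, IsModParking, ZMod.val_cast_of_lt (hlt _)] using hk
  · rintro ⟨u, hu, rfl⟩
    exact ⟨fun i => ZMod.val_lt _, hu⟩

/-- The number of `y(a,b,m)`-parking functions is `a^{bm−1} m^{bm−2}`, where
`y(a,b,m) ∈ ℕ^{bm−1}` has `j`-th entry `a` if `j ≡ 1 (mod b)` (0-based: entry `k` is `a` iff
`k ≡ 0 (mod b)`) and `0` otherwise. -/
theorem stmt19 (a b m : ℕ) (ha : 1 ≤ a) (hb : 1 ≤ b) (hm : 2 ≤ m) :
    Set.ncard {α : Fin (b * m - 1) → ℕ |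
        IsVPF (b * m - 1) (fun k => if k % b = 0 then a else 0) α} =
      a ^ (b * m - 1) * m ^ (b * m - 2) := by
  have : NeZero m := ⟨by omega⟩
  have hbm : 2 ≤ b * m := le_trans hm (Nat.le_mul_of_pos_left m hb)
  have hn : b * m - 1 + 1 = b * m := by omega
  have hy : (fun k => if k % b = 0 then a else 0) = fun k => a * if k % b = 0 then 1 else 0 := by
    simp
  have hpark := ncard_isModParking_mul (ι := Fin (b * m - 1)) (by rwa [Fintype.card_fin])
  rw [Fintype.card_fin, ← pow_sub_one_mul (by omega : b * m - 1 ≠ 0),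
    show b * m - 1 - 1 = b * m - 2 by omega] at hpark
  rw [hy, ncard_setOf_isVPF_mul ha, setOf_isVPF_ite_mod_eq_image hb hn,
    Set.ncard_image_of_injective _ fun u v h => funext fun i => ZMod.val_injective m (congrFun h i)]
  exact congrArg _ (Nat.eq_of_mul_eq_mul_right (NeZero.pos m) hpark)
end
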